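/- arXiv:1410.3327 — 4 statements merged into one kernel-verified Lean document; each statement's English description precedes it below -/
import Mathlib

section
/- In the filtered graded Poisson algebra X₀ with filtration F^p X₀ by the ideal generated by degree-≥p elements: (a) {F^p X₀^1, F^q X₀^1} ⊆ F^{max(p,q)} X₀ if p ≠ q, and ⊆ F^{p+1} X₀ if p = q; (b) {F^p X₀, X₀^m} ⊆ F^p X₀ for m ≥ 0; (c) {F^p X₀^n, X₀^m} ⊆ F^{p - max(|n|,|m|)} X₀^{n+m}. -/
/-!
Every element of `F^p X₀` is an `ℝ`-combination of products `a * g` with `a` homogeneous and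
`deg g ≥ p`, and those of degree `n` can be taken with `a` of degree `n - deg g`. By graded
antisymmetry and the Leibniz rule, `{a * g, y}` is an `X₀`-combination of `{y, a} * g` and
`{y, g}`: the first term keeps the factor `g`, and the second has degree `deg g + deg y`, so
bracketing with `y` lowers the filtration degree by at most `max (-deg y) 0`. This gives (b),
(c) and the case `p ≠ q` of (a). For `p = q ≥ 1` one expands `{a * g, b * h}`, with
`deg (a * g) = deg (b * h) = 1`, once more by the Leibniz rule: every term is a multiple of a
homogeneous element of degree `deg g + deg h`, `deg g + 1` or `deg h + 1`, all at least `p + 1`.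
-/

/-- The filtration ideal `F^p X₀`: the ideal generated by homogeneous elements of
degree at least `p` in the graded algebra `X₀` with grading `𝒳`. -/
noncomputable def Filt {X : Type*} [CommRing X] [Algebra ℝ X]
    (𝒳 : ℤ → Submodule ℝ X) (p : ℤ) : Ideal X :=
  Ideal.span {x : X | ∃ i : ℤ, p ≤ i ∧ x ∈ 𝒳 i}

variable {X : Type*} [CommRing X] [Algebra ℝ X]

open DirectSum

structure IsGradedLeibnizBracket (𝒳 : ℤ → Submodule ℝ X) (B : X →ₗ[ℝ] X →ₗ[ℝ] X) : Prop where
  mem_add : ∀ i j : ℤ, ∀ x ∈ 𝒳 i, ∀ y ∈ 𝒳 j, B x y ∈ 𝒳 (i + j)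
  skew : ∀ i j : ℤ, ∀ x ∈ 𝒳 i, ∀ y ∈ 𝒳 j, B x y = - (((-1 : ℝ) ^ (i * j)) • B y x)
  leibniz : ∀ i j : ℤ, ∀ x ∈ 𝒳 i, ∀ y ∈ 𝒳 j, ∀ z : X,
    B x (y * z) = B x y * z + ((-1 : ℝ) ^ (i * j)) • (y * B x z)

section Filtration

variable (𝒳 : ℤ → Submodule ℝ X)

lemma mem_filt_of_mem {p i : ℤ} {x : X} (hx : x ∈ 𝒳 i) (h : p ≤ i) : x ∈ Filt 𝒳 p :=
  Ideal.subset_span ⟨i, h, hx⟩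

lemma filt_antitone : Antitone (Filt 𝒳) :=
  fun _ _ h => Ideal.span_mono fun _ ⟨i, hi, hx⟩ => ⟨i, h.trans hi, hx⟩

def degProd (p n : ℤ) : Set X :=
  {x | ∃ i : ℤ, p ≤ i ∧ ∃ a ∈ 𝒳 (n - i), ∃ g ∈ 𝒳 i, x = a * g}

variable [GradedAlgebra 𝒳]

lemma decompose_mem_span_degProd {p : ℤ} {x : X} (hx : x ∈ Filt 𝒳 p) (n : ℤ) :
    (decompose 𝒳 x n : X) ∈ Submodule.span ℝ (degProd 𝒳 p n) := by
  obtain ⟨k, c, s, rfl⟩ := Submodule.mem_span_set'.1 hx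
  rw [← GradedAlgebra.proj_apply, map_sum]
  refine Submodule.sum_mem _ fun t _ => Submodule.subset_span ?_
  obtain ⟨i, hi, hs⟩ := (s t).2
  refine ⟨i, hi, _, (decompose 𝒳 (c t) (n - i)).2, _, hs, ?_⟩
  rw [GradedAlgebra.proj_apply, smul_eq_mul, ← coe_decompose_mul_add_of_right_mem 𝒳 hs,
    sub_add_cancel]

lemma mem_span_degProd_of_mem_filt {p n : ℤ} {x : X} (hx : x ∈ Filt 𝒳 p) (hn : x ∈ 𝒳 n) :
    x ∈ Submodule.span ℝ (degProd 𝒳 p n) := by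
  simpa only [decompose_of_mem_same 𝒳 hn] using decompose_mem_span_degProd 𝒳 hx n

end Filtration

namespace IsGradedLeibnizBracket

variable {𝒳 : ℤ → Submodule ℝ X} {B : X →ₗ[ℝ] X →ₗ[ℝ] X}

lemma mem_of_swap (hB : IsGradedLeibnizBracket 𝒳 B) {I : Ideal X} {i j : ℤ} {x y : X}
    (hx : x ∈ 𝒳 i) (hy : y ∈ 𝒳 j) (h : B y x ∈ I) : B x y ∈ I := by
  rw [hB.skew _ _ _ hx _ hy]
  exact neg_mem (Submodule.smul_of_tower_mem _ _ h)

variable [GradedAlgebra 𝒳]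

lemma mul_left_mem_span_pair (hB : IsGradedLeibnizBracket 𝒳 B) {i j k : ℤ} {a g y : X}
    (ha : a ∈ 𝒳 k) (hg : g ∈ 𝒳 i) (hy : y ∈ 𝒳 j) :
    B (a * g) y ∈ Ideal.span {B y a * g, B y g} := by
  refine hB.mem_of_swap (SetLike.mul_mem_graded ha hg) hy ?_
  rw [hB.leibniz _ _ _ hy _ ha]
  refine add_mem (Ideal.subset_span (by simp)) (Submodule.smul_of_tower_mem _ _ ?_)
  exact Ideal.mul_mem_left _ _ (Ideal.subset_span (by simp))

lemma mem_filt_add_min (hB : IsGradedLeibnizBracket 𝒳 B) {p j : ℤ} {x y : X}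
    (hx : x ∈ Filt 𝒳 p) (hy : y ∈ 𝒳 j) : B x y ∈ Filt 𝒳 (p + min j 0) := by
  classical
  have hgen : ∀ n, degProd 𝒳 p n ⊆ ((Filt 𝒳 (p + min j 0)).restrictScalars ℝ).comap (B.flip y) := by
    rintro n _ ⟨i, hi, a, ha, g, hg, rfl⟩
    show B (a * g) y ∈ Filt 𝒳 (p + min j 0)
    refine Ideal.span_le.2 ?_ (hB.mul_left_mem_span_pair ha hg hy)
    refine Set.pair_subset ?_ ?_
    · exact Ideal.mul_mem_left _ _ (mem_filt_of_mem 𝒳 hg (by omega))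
    · exact mem_filt_of_mem 𝒳 (hB.mem_add _ _ _ hy _ hg) (by omega)
  rw [← sum_support_decompose 𝒳 x, map_sum, LinearMap.sum_apply]
  exact Ideal.sum_mem _ fun n _ =>
    Submodule.span_le.2 (hgen n) (decompose_mem_span_degProd 𝒳 hx n)

lemma mem_filt_succ_of_mem_one (hB : IsGradedLeibnizBracket 𝒳 B) {p : ℤ} (hp : 0 ≤ p) {x y : X}
    (hxF : x ∈ Filt 𝒳 p) (hx : x ∈ 𝒳 1) (hyF : y ∈ Filt 𝒳 p) (hy : y ∈ 𝒳 1) :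
    B x y ∈ Filt 𝒳 (p + 1) := by
  obtain rfl | hp := hp.eq_or_lt
  · exact mem_filt_of_mem 𝒳 (hB.mem_add _ _ _ hx _ hy) (by norm_num)
  have hxy := Submodule.apply_mem_map₂ B (mem_span_degProd_of_mem_filt 𝒳 hxF hx)
    (mem_span_degProd_of_mem_filt 𝒳 hyF hy)
  rw [Submodule.map₂_span_span] at hxy
  refine (Submodule.span_le (p := (Filt 𝒳 (p + 1)).restrictScalars ℝ)).2 ?_ hxy
  rintro _ ⟨_, ⟨i, hi, a, ha, g, hg, rfl⟩, _, ⟨s, hs, b, hb, h, hh, rfl⟩, rfl⟩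
  have hag : a * g ∈ 𝒳 1 := by simpa using SetLike.mul_mem_graded ha hg
  show B (a * g) (b * h) ∈ Filt 𝒳 (p + 1)
  rw [hB.leibniz _ _ _ hag _ hb]
  refine add_mem ?_ (Submodule.smul_of_tower_mem _ _ (Ideal.mul_mem_left _ _ ?_))
  · obtain ⟨c, d, hcd⟩ := Ideal.mem_span_pair.1 (hB.mul_left_mem_span_pair ha hg hb)
    rw [← hcd, add_mul, mul_assoc, mul_assoc, mul_assoc]
    refine add_mem (Ideal.mul_mem_left _ _ (Ideal.mul_mem_left _ _ ?_)) (Ideal.mul_mem_left _ _ ?_)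
    · exact mem_filt_of_mem 𝒳 (SetLike.mul_mem_graded hg hh) (by omega)
    · exact mem_filt_of_mem 𝒳 (SetLike.mul_mem_graded (hB.mem_add _ _ _ hb _ hg) hh) (by omega)
  · refine Ideal.span_le.2 (Set.pair_subset ?_ ?_) (hB.mul_left_mem_span_pair ha hg hh)
    · exact mem_filt_of_mem 𝒳 (SetLike.mul_mem_graded (hB.mem_add _ _ _ hh _ ha) hg) (by omega)
    · exact mem_filt_of_mem 𝒳 (hB.mem_add _ _ _ hh _ hg) (by omega)

end IsGradedLeibnizBracket

/-- in the filtered graded Poisson algebra `X₀` with the filtration by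
ideals `F^p X₀` generated by degree-≥p elements:
(a) `{F^p X₀¹, F^q X₀¹} ⊆ F^{max(p,q)} X₀` if `p ≠ q` and `⊆ F^{p+1} X₀` if `p = q`;
(b) `{F^p X₀, X₀^m} ⊆ F^p X₀` for `m ≥ 0`;
(c) `{F^p X₀ⁿ, X₀^m} ∪ {X₀ⁿ, F^p X₀^m} ⊆ F^{p - max(|n|,|m|)} X₀^{n+m}`. -/
theorem stmt_4
    (𝒳 : ℤ → Submodule ℝ X) [GradedAlgebra 𝒳]
    (B : X →ₗ[ℝ] X →ₗ[ℝ] X)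
    (hdeg : ∀ i j : ℤ, ∀ x ∈ 𝒳 i, ∀ y ∈ 𝒳 j, B x y ∈ 𝒳 (i + j))
    (hskew : ∀ i j : ℤ, ∀ x ∈ 𝒳 i, ∀ y ∈ 𝒳 j,
      B x y = - (((-1 : ℝ) ^ (i * j)) • B y x))
    (hleib : ∀ i j : ℤ, ∀ x ∈ 𝒳 i, ∀ y ∈ 𝒳 j, ∀ z : X,
      B x (y * z) = B x y * z + ((-1 : ℝ) ^ (i * j)) • (y * B x z)) :
    -- (a)
    (∀ p q : ℕ, ∀ x, x ∈ Filt 𝒳 (p : ℤ) → x ∈ 𝒳 1 →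
      ∀ y, y ∈ Filt 𝒳 (q : ℤ) → y ∈ 𝒳 1 →
      B x y ∈ Filt 𝒳 (if p = q then (p : ℤ) + 1 else max (p : ℤ) (q : ℤ))) ∧
    -- (b)
    (∀ (p : ℕ) (m : ℤ), 0 ≤ m → ∀ x ∈ Filt 𝒳 (p : ℤ), ∀ y ∈ 𝒳 m,
      B x y ∈ Filt 𝒳 (p : ℤ)) ∧
    -- (c)
    (∀ (p : ℕ) (n m : ℤ),
      (∀ x, x ∈ Filt 𝒳 (p : ℤ) → x ∈ 𝒳 n → ∀ y ∈ 𝒳 m,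
        B x y ∈ Filt 𝒳 ((p : ℤ) - max |n| |m|)) ∧
      (∀ x ∈ 𝒳 n, ∀ y, y ∈ Filt 𝒳 (p : ℤ) → y ∈ 𝒳 m →
        B x y ∈ Filt 𝒳 ((p : ℤ) - max |n| |m|))) := by
  have hB : IsGradedLeibnizBracket 𝒳 B := ⟨hdeg, hskew, hleib⟩
  refine ⟨fun p q x hxF hx y hyF hy => ?_, fun p m hm x hx y hy => ?_, fun p n m => ⟨?_, ?_⟩⟩
  · split_ifs with hpq
    · subst hpq
      exact hB.mem_filt_succ_of_mem_one p.cast_nonneg hxF hx hyF hy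
    · have hp : B x y ∈ Filt 𝒳 p := by simpa using hB.mem_filt_add_min hxF hy
      have hq : B x y ∈ Filt 𝒳 q := hB.mem_of_swap hx hy (by simpa using hB.mem_filt_add_min hyF hx)
      rcases max_choice (p : ℤ) q with h | h <;> rwa [h]
  · simpa [hm] using hB.mem_filt_add_min hx hy
  · intro x hxF _ y hy
    exact filt_antitone 𝒳 (by grind) (hB.mem_filt_add_min hxF hy)
  · intro x hx y hyF hy
    exact hB.mem_of_swap hx hy (filt_antitone 𝒳 (by grind) (hB.mem_filt_add_min hyF hx))
end

section
/- Let I₀ = F¹X₀ be the ideal of X₀ generated by elements of positive degree and I₀^{(2)} its ideal square. Then {X₀^1 ∩ I₀^{(2)}, F^m X₀} ⊆ F^{m+1} X₀ for all m ≥ 0; i.e., bracketing with a degree-1 element lying in the square of the positive ideal raises filtration degree by at least one. -/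
variable {X : Type*} [CommRing X] [Algebra ℝ X]

lemma filt_smul (𝒳 : ℤ → Submodule ℝ X) (p : ℤ) (c : ℝ) {x : X}
    (hx : x ∈ Filt 𝒳 p) : c • x ∈ Filt 𝒳 p := by
  rw [Algebra.smul_def]; exact Ideal.mul_mem_left _ _ hx

open Pointwise in
lemma filt_mul (𝒳 : ℤ → Submodule ℝ X) [GradedAlgebra 𝒳] (p q : ℤ) {x y : X}
    (hx : x ∈ Filt 𝒳 p) (hy : y ∈ Filt 𝒳 q) : x * y ∈ Filt 𝒳 (p + q) := by
  have h : Filt 𝒳 p * Filt 𝒳 q ≤ Filt 𝒳 (p + q) := by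
    simp only [Filt]
    rw [Ideal.span_mul_span', Ideal.span_le]
    rintro _ ⟨u, ⟨i, hi, hu⟩, v, ⟨j, hj, hv⟩, rfl⟩
    exact Ideal.subset_span ⟨i + j, by omega, SetLike.mul_mem_graded hu hv⟩
  exact h (Ideal.mul_mem_mul hx hy)

open Pointwise in
lemma lemA (𝒳 : ℤ → Submodule ℝ X) [GradedAlgebra 𝒳]
    (B : X →ₗ[ℝ] X →ₗ[ℝ] X)
    (hleib : ∀ i j : ℤ, ∀ x ∈ 𝒳 i, ∀ y ∈ 𝒳 j, ∀ z : X,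
      B x (y * z) = B x y * z + ((-1 : ℝ) ^ (i * j)) • (y * B x z))
    (j : ℤ) (a : X) (ha : a ∈ 𝒳 j)
    {x : X} (hx : x ∈ Filt 𝒳 1 * Filt 𝒳 1) : B a x ∈ Filt 𝒳 1 := by
  have hx' : x ∈ Ideal.span ({x : X | ∃ i : ℤ, 1 ≤ i ∧ x ∈ 𝒳 i} *
      {x : X | ∃ i : ℤ, 1 ≤ i ∧ x ∈ 𝒳 i}) := by
    rw [← Ideal.span_mul_span']; exact hx
  clear hx
  have key : ∀ r : X, B a (r * x) ∈ Filt 𝒳 1 := by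
    induction hx' using Submodule.span_induction with
    | mem z hz =>
      obtain ⟨u, ⟨i, hi, hu⟩, v, ⟨k, hk, hv⟩, rfl⟩ := hz
      intro r
      have heq : r * (u * v) = u * (v * r) := by ring
      rw [heq, hleib j i a ha u hu (v * r)]
      refine add_mem ?_ (filt_smul _ _ _ ?_)
      · exact Ideal.mul_mem_left _ _ (Ideal.mul_mem_right r _
          (Ideal.subset_span ⟨k, hk, hv⟩))
      · exact Ideal.mul_mem_right _ _ (Ideal.subset_span ⟨i, hi, hu⟩)
    | zero => intro r; simp
    | add y z _ _ hy hz =>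
      intro r
      rw [mul_add, map_add]
      exact add_mem (hy r) (hz r)
    | smul c y _ hy =>
      intro r
      rw [smul_eq_mul, ← mul_assoc]
      exact hy (r * c)
  simpa using key 1

lemma lemB (𝒳 : ℤ → Submodule ℝ X) [GradedAlgebra 𝒳]
    (B : X →ₗ[ℝ] X →ₗ[ℝ] X)
    (hskew : ∀ i j : ℤ, ∀ x ∈ 𝒳 i, ∀ y ∈ 𝒳 j,
      B x y = - (((-1 : ℝ) ^ (i * j)) • B y x))
    (hleib : ∀ i j : ℤ, ∀ x ∈ 𝒳 i, ∀ y ∈ 𝒳 j, ∀ z : X,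
      B x (y * z) = B x y * z + ((-1 : ℝ) ^ (i * j)) • (y * B x z))
    (x : X) (hx1 : x ∈ 𝒳 1) (hx2 : x ∈ Filt 𝒳 1 * Filt 𝒳 1)
    (a : X) : B x a ∈ Filt 𝒳 1 := by
  induction a using DirectSum.Decomposition.inductionOn 𝒳 with
  | zero => simp
  | @homogeneous j aj =>
    rw [hskew 1 j x hx1 aj.1 aj.2]
    exact neg_mem (filt_smul _ _ _ (lemA 𝒳 B hleib j aj.1 aj.2 hx2))
  | add y z hy hz =>
    rw [map_add]
    exact add_mem hy hz

/-- with `I₀ = F¹X₀` the ideal generated by positive-degree elements and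
`I₀^(2)` its ideal square, one has `{X₀¹ ∩ I₀^(2), F^m X₀} ⊆ F^{m+1} X₀` for `m ≥ 0`:
bracketing with a degree-1 element of the square of the positive ideal raises the
filtration degree by at least one. -/
theorem stmt_6
    (𝒳 : ℤ → Submodule ℝ X) [GradedAlgebra 𝒳]
    (B : X →ₗ[ℝ] X →ₗ[ℝ] X)
    (hdeg : ∀ i j : ℤ, ∀ x ∈ 𝒳 i, ∀ y ∈ 𝒳 j, B x y ∈ 𝒳 (i + j))
    (hskew : ∀ i j : ℤ, ∀ x ∈ 𝒳 i, ∀ y ∈ 𝒳 j,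
      B x y = - (((-1 : ℝ) ^ (i * j)) • B y x))
    (hleib : ∀ i j : ℤ, ∀ x ∈ 𝒳 i, ∀ y ∈ 𝒳 j, ∀ z : X,
      B x (y * z) = B x y * z + ((-1 : ℝ) ^ (i * j)) • (y * B x z)) :
    ∀ (m : ℕ) (x : X), x ∈ 𝒳 1 → x ∈ (Filt 𝒳 1) ^ 2 →
      ∀ y ∈ Filt 𝒳 (m : ℤ), B x y ∈ Filt 𝒳 ((m : ℤ) + 1) := by
  intro m x hx1 hx2 y hy
  rw [pow_two] at hx2
  rw [Filt] at hy
  have key : ∀ r : X, B x (r * y) ∈ Filt 𝒳 ((m : ℤ) + 1) := by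
    induction hy using Submodule.span_induction with
    | mem g hg =>
      obtain ⟨i, hi, hgi⟩ := hg
      intro r
      rw [mul_comm, hleib 1 i x hx1 g hgi r]
      refine add_mem ?_ (filt_smul _ _ _ ?_)
      · exact Ideal.mul_mem_right _ _
          (Ideal.subset_span ⟨1 + i, by omega, hdeg 1 i x hx1 g hgi⟩)
      · exact filt_mul 𝒳 (m : ℤ) 1 (Ideal.subset_span ⟨i, hi, hgi⟩)
          (lemB 𝒳 B hskew hleib x hx1 hx2 r)
    | zero => intro r; simp
    | add u v _ _ hu hv =>
      intro r
      rw [mul_add, map_add]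
      exact add_mem (hu r) (hv r)
    | smul c u _ hu =>
      intro r
      rw [smul_eq_mul, ← mul_assoc]
      exact hu (r * c)
  simpa using key 1
end

section
/- In P = ℝ[x₁,x₂,y₁,y₂] with {xᵢ,yⱼ} = δᵢⱼ and J = (x₁y₂ − x₂y₁): the elements a = x₁² + x₂² and b = y₁² + y₂² satisfy {a, μ} ∈ J and {b, μ} ∈ J (so they define classes in (P/J)^J), but {a,b} = 4(x₁y₁ + x₂y₂) does not belong to J. Hence the induced Poisson bracket on (P/J)^J is nonzero. -/
/-!
`μ` generates the simultaneous rotation of `x` and `y`, so the rotation invariants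
`a = |x|²` and `b = |y|²` Poisson-commute with it outright. Their bracket `4 ⟨x, y⟩`, however,
equals `4` at the point `x = y = (1, 0)`, where `μ` vanishes, so it is not a multiple of `μ`.
-/

open MvPolynomial

/-- The canonical Poisson bracket on `P = ℝ[x₁,x₂,y₁,y₂]`, with `x i = X (inl i)`,
`y i = X (inr i)`, determined by `{xᵢ, yⱼ} = δᵢⱼ`, `{xᵢ,xⱼ} = {yᵢ,yⱼ} = 0`. -/
noncomputable def pb (f g : MvPolynomial (Fin 2 ⊕ Fin 2) ℝ) :
    MvPolynomial (Fin 2 ⊕ Fin 2) ℝ :=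
  ∑ i : Fin 2,
    (pderiv (Sum.inl i) f * pderiv (Sum.inr i) g -
      pderiv (Sum.inr i) f * pderiv (Sum.inl i) g)

/-- The angular momentum `μ = x₁y₂ − x₂y₁`. -/
noncomputable def μpoly : MvPolynomial (Fin 2 ⊕ Fin 2) ℝ :=
  X (Sum.inl 0) * X (Sum.inr 1) - X (Sum.inl 1) * X (Sum.inr 0)

theorem Ideal.notMem_span_singleton_of_map_eq_zero {R S : Type*} [CommSemiring R] [Semiring S]
    (f : R →+* S) {a b : R} (ha : f a = 0) (hb : f b ≠ 0) : b ∉ Ideal.span {a} := by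
  intro hmem
  obtain ⟨c, rfl⟩ := Ideal.mem_span_singleton'.1 hmem
  exact hb (by rw [map_mul, ha, mul_zero])

theorem pb_sq_add_sq_inl_μpoly :
    pb (X (Sum.inl 0) ^ 2 + X (Sum.inl 1) ^ 2) μpoly = 0 := by
  simp only [pb, μpoly, Fin.sum_univ_two, map_add, map_sub, Derivation.leibniz_pow,
    Derivation.leibniz, pderiv_X, Pi.single_apply, Sum.inl.injEq, Sum.inr.injEq, reduceCtorEq,
    Fin.reduceEq, if_true, if_false, smul_eq_mul, nsmul_eq_mul]
  ring

theorem pb_sq_add_sq_inr_μpoly :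
    pb (X (Sum.inr 0) ^ 2 + X (Sum.inr 1) ^ 2) μpoly = 0 := by
  simp only [pb, μpoly, Fin.sum_univ_two, map_add, map_sub, Derivation.leibniz_pow,
    Derivation.leibniz, pderiv_X, Pi.single_apply, Sum.inl.injEq, Sum.inr.injEq, reduceCtorEq,
    Fin.reduceEq, if_true, if_false, smul_eq_mul, nsmul_eq_mul]
  ring

theorem pb_sq_add_sq_inl_sq_add_sq_inr :
    pb (X (Sum.inl 0) ^ 2 + X (Sum.inl 1) ^ 2) (X (Sum.inr 0) ^ 2 + X (Sum.inr 1) ^ 2) =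
      4 * (X (Sum.inl 0) * X (Sum.inr 0) + X (Sum.inl 1) * X (Sum.inr 1)) := by
  simp only [pb, Fin.sum_univ_two, map_add, Derivation.leibniz_pow, pderiv_X, Pi.single_apply,
    Sum.inl.injEq, Sum.inr.injEq, reduceCtorEq, Fin.reduceEq, if_true, if_false, smul_eq_mul,
    nsmul_eq_mul]
  ring

theorem four_mul_inner_notMem_span_μpoly :
    4 * (X (Sum.inl 0) * X (Sum.inr 0) + X (Sum.inl 1) * X (Sum.inr 1) :
        MvPolynomial (Fin 2 ⊕ Fin 2) ℝ) ∉ Ideal.span {μpoly} := by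
  let point : Fin 2 ⊕ Fin 2 → ℝ := fun v => if v = Sum.inl 0 ∨ v = Sum.inr 0 then 1 else 0
  refine Ideal.notMem_span_singleton_of_map_eq_zero (eval point) ?_ ?_ <;>
    simp [point, μpoly]

/-- `a = x₁² + x₂²` and `b = y₁² + y₂²` satisfy `{a,μ} ∈ J` and
`{b,μ} ∈ J` (so they define classes in `(P/J)^J`), but
`{a,b} = 4(x₁y₁ + x₂y₂) ∉ J`; hence the induced bracket on `(P/J)^J` is nonzero. -/
theorem stmt_11 :
    let a : MvPolynomial (Fin 2 ⊕ Fin 2) ℝ := X (Sum.inl 0) ^ 2 + X (Sum.inl 1) ^ 2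
    let b : MvPolynomial (Fin 2 ⊕ Fin 2) ℝ := X (Sum.inr 0) ^ 2 + X (Sum.inr 1) ^ 2
    pb a μpoly ∈ Ideal.span {μpoly} ∧
    pb b μpoly ∈ Ideal.span {μpoly} ∧
    pb a b = 4 * (X (Sum.inl 0) * X (Sum.inr 0) + X (Sum.inl 1) * X (Sum.inr 1)) ∧
    pb a b ∉ Ideal.span {μpoly} := by
  intro a b
  refine ⟨?_, ?_, pb_sq_add_sq_inl_sq_add_sq_inr, ?_⟩
  · exact pb_sq_add_sq_inl_μpoly ▸ Ideal.zero_mem _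
  · exact pb_sq_add_sq_inr_μpoly ▸ Ideal.zero_mem _
  · rw [pb_sq_add_sq_inl_sq_add_sq_inr]
    exact four_mul_inner_notMem_span_μpoly
end

section
/- Let (X,d) be a complete filtered cochain complex with filtration X = F⁰X ⊇ F¹X ⊇ ⋯, d(F^pX) ⊆ F^pX, and X^n = lim_← X^n/F^pX^n. Suppose that for every p, H^j(F^pX/F^{p+1}X, d) = 0 for all j ≠ p (cohomology of the associated graded concentrated on the diagonal). Then H^j(F^pX, d) = 0 whenever j < p. Consequently the cohomology of X is concentrated in non-negative degrees. -/
/-!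
A cocycle `x ∈ F p` of degree `j < p` is killed one filtration step at a time: since the
associated graded has no cohomology in degree `j ≠ p + l`, a cocycle in `F (p + l)` differs by a
coboundary `d yₗ`, `yₗ ∈ F (p + l)`, from a cocycle in `F (p + l + 1)`. Completeness sums the
`yₗ` to some `s`, and `d s - x` lies in every `F n`, so `d s = x` by separatedness.
-/

open Finset

theorem exists_seq_forall_sub_sum_of_step {X : Type*} [AddCommGroup X] (f : X → X)
    (P Q : ℕ → X → Prop) (step : ∀ l z, P l z → ∃ y, Q l y ∧ P (l + 1) (z - f y))
    {x : X} (hx : P 0 x) :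
    ∃ y : ℕ → X, (∀ l, Q l (y l)) ∧ ∀ n, P n (x - ∑ l ∈ range n, f (y l)) := by
  have step' : ∀ l z, ∃ y, P l z → Q l y ∧ P (l + 1) (z - f y) := fun l z => by
    by_cases h : P l z
    · obtain ⟨y, hy⟩ := step l z h
      exact ⟨y, fun _ => hy⟩
    · exact ⟨0, fun h' => absurd h' h⟩
  choose Y hY using step'
  let z : ℕ → X := fun n => Nat.rec x (fun l zl => zl - f (Y l zl)) n
  have hz : ∀ n, P n (z n) := fun n => by
    induction n with
    | zero => exact hx
    | succ n ih => exact (hY n _ ih).2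
  have hz_eq : ∀ n, z n = x - ∑ l ∈ range n, f (Y l (z l)) := fun n => by
    induction n with
    | zero => simp [z]
    | succ n ih =>
      rw [sum_range_succ, sub_add_eq_sub_sub, ← ih]
  exact ⟨fun l => Y l (z l), fun l => (hY l _ (hz l)).1, fun n => hz_eq n ▸ hz n⟩

section Filtration

variable {R X : Type*} [Ring R] [AddCommGroup X] [Module R X] {F : ℕ → Submodule R X}

theorem mem_of_sub_sum_range_mem (hF : Antitone F) {p : ℕ} {y : ℕ → X}
    (hy : ∀ l, y l ∈ F (p + l)) {s : X} (hs : s - ∑ l ∈ range p, y l ∈ F p) : s ∈ F p := by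
  have hsum : ∑ l ∈ range p, y l ∈ F p :=
    sum_mem fun l _ => hF (Nat.le_add_right p l) (hy l)
  simpa using add_mem hs hsum

theorem map_eq_of_sub_sum_range_mem (hF : Antitone F) (hsep : ∀ x : X, (∀ p, x ∈ F p) → x = 0)
    (d : X →ₗ[R] X) (hdF : ∀ p : ℕ, ∀ x ∈ F p, d x ∈ F p) {p : ℕ} {x s : X} {y : ℕ → X}
    (hs : ∀ n, s - ∑ l ∈ range n, y l ∈ F n)
    (hx : ∀ n, x - ∑ l ∈ range n, d (y l) ∈ F (p + n)) : d s = x := by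
  refine sub_eq_zero.mp (hsep _ fun n => ?_)
  have hsplit : d s - x = d (s - ∑ l ∈ range n, y l) - (x - ∑ l ∈ range n, d (y l)) := by
    rw [map_sub, map_sum]
    abel
  rw [hsplit]
  exact sub_mem (hdF n _ (hs n)) (hF (Nat.le_add_left n p) (hx n))

theorem exists_sub_map_mem_succ_of_cocycle
    {𝒳 : ℤ → Submodule R X} {d : X →ₗ[R] X}
    (hddeg : ∀ j : ℤ, ∀ x ∈ 𝒳 j, d x ∈ 𝒳 (j + 1)) (hdd : ∀ x, d (d x) = 0)
    (hgr : ∀ (p : ℕ) (j : ℤ), j ≠ (p : ℤ) → ∀ x : X, x ∈ F p → x ∈ 𝒳 j →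
      d x ∈ F (p + 1) →
      ∃ y : X, y ∈ F p ∧ y ∈ 𝒳 (j - 1) ∧ x - d y ∈ F (p + 1))
    {p : ℕ} {j : ℤ} (hj : j ≠ (p : ℤ)) {z : X} (hzF : z ∈ F p) (hz𝒳 : z ∈ 𝒳 j) (hdz : d z = 0) :
    ∃ y, (y ∈ F p ∧ y ∈ 𝒳 (j - 1)) ∧
      z - d y ∈ F (p + 1) ∧ z - d y ∈ 𝒳 j ∧ d (z - d y) = 0 := by
  obtain ⟨y, hyF, hy𝒳, hzy⟩ := hgr p j hj z hzF hz𝒳 (hdz ▸ zero_mem _)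
  have hdy : d y ∈ 𝒳 j := by simpa using hddeg (j - 1) y hy𝒳
  exact ⟨y, ⟨hyF, hy𝒳⟩, hzy, sub_mem hz𝒳 hdy, by rw [map_sub, hdz, hdd, sub_zero]⟩

end Filtration

/-- let `(X,d)` be a complete filtered graded cochain complex
(`F 0 = ⊤ ⊇ F 1 ⊇ ⋯`, `d(F p) ⊆ F p`, `d` of degree `+1` with respect to the grading
`𝒳`, the filtration separated and complete: infinite sums `Σ yₗ` with `yₗ ∈ F l`
converge, and the graded pieces `𝒳 j` are closed under such limits).  If for every `p`
the cohomology of the associated graded `F p X/F (p+1) X` vanishes outside degree `p`,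
then `H^j(F p X, d) = 0` whenever `j < p`; consequently the cohomology of `X` is
concentrated in non-negative degrees. -/
theorem stmt_15 {X : Type*} [AddCommGroup X] [Module ℝ X]
    (𝒳 : ℤ → Submodule ℝ X)
    (F : ℕ → Submodule ℝ X)
    (hF0 : F 0 = ⊤) (hFmono : ∀ p, F (p + 1) ≤ F p)
    (hsep : ∀ x : X, (∀ p, x ∈ F p) → x = 0)
    (hcomplete : ∀ y : ℕ → X, (∀ l, y l ∈ F l) →
      ∃ s : X, ∀ p : ℕ, s - (∑ l ∈ Finset.range p, y l) ∈ F p)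
    (hclosed : ∀ (j : ℤ) (y : ℕ → X) (s : X), (∀ l, y l ∈ 𝒳 j) →
      (∀ p : ℕ, s - (∑ l ∈ Finset.range p, y l) ∈ F p) → s ∈ 𝒳 j)
    (d : X →ₗ[ℝ] X)
    (hddeg : ∀ j : ℤ, ∀ x ∈ 𝒳 j, d x ∈ 𝒳 (j + 1))
    (hdF : ∀ p : ℕ, ∀ x ∈ F p, d x ∈ F p)
    (hdd : ∀ x, d (d x) = 0)
    (hgr : ∀ (p : ℕ) (j : ℤ), j ≠ (p : ℤ) → ∀ x : X, x ∈ F p → x ∈ 𝒳 j →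
      d x ∈ F (p + 1) →
      ∃ y : X, y ∈ F p ∧ y ∈ 𝒳 (j - 1) ∧ x - d y ∈ F (p + 1)) :
    (∀ (p : ℕ) (j : ℤ), j < (p : ℤ) → ∀ x : X, x ∈ F p → x ∈ 𝒳 j → d x = 0 →
      ∃ y : X, y ∈ F p ∧ y ∈ 𝒳 (j - 1) ∧ d y = x) ∧
    (∀ j : ℤ, j < 0 → ∀ x ∈ 𝒳 j, d x = 0 → ∃ y ∈ 𝒳 (j - 1), d y = x) := by
  have hF : Antitone F := antitone_nat_of_succ_le hFmono
  have hfil : ∀ (p : ℕ) (j : ℤ), j < (p : ℤ) → ∀ x : X, x ∈ F p → x ∈ 𝒳 j → d x = 0 →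
      ∃ y : X, y ∈ F p ∧ y ∈ 𝒳 (j - 1) ∧ d y = x := by
    intro p j hj x hxF hx𝒳 hdx
    obtain ⟨y, hy, hrest⟩ := exists_seq_forall_sub_sum_of_step d
      (fun n z => z ∈ F (p + n) ∧ z ∈ 𝒳 j ∧ d z = 0) (fun l y => y ∈ F (p + l) ∧ y ∈ 𝒳 (j - 1))
      (fun l z ⟨hzF, hz𝒳, hdz⟩ => exists_sub_map_mem_succ_of_cocycle hddeg hdd hgr
        (by omega) hzF hz𝒳 hdz)
      ⟨hxF, hx𝒳, hdx⟩
    obtain ⟨s, hs⟩ := hcomplete y fun l => hF (Nat.le_add_left l p) (hy l).1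
    exact ⟨s, mem_of_sub_sum_range_mem hF (fun l => (hy l).1) (hs p),
      hclosed (j - 1) y s (fun l => (hy l).2) hs,
      map_eq_of_sub_sum_range_mem hF hsep d hdF hs fun n => (hrest n).1⟩
  refine ⟨hfil, fun j hj x hx𝒳 hdx => ?_⟩
  obtain ⟨y, -, hy𝒳, hdy⟩ := hfil 0 j hj x (hF0 ▸ Submodule.mem_top) hx𝒳 hdx
  exact ⟨y, hy𝒳, hdy⟩
end
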